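/- Let A₀, A₁, h₀, h₁ be real polynomials in one variable and g₀, g₁ real polynomials in two variables. Let I ⊆ ℝ be an open interval containing 0 on which A₁(x) ≠ 0 and h₁(x) ≠ 0; set A(x) = A₀(x)/A₁(x). Define Pₗ(x,y) = A₁(x)·h₁(x)·(g₁·∂g₀/∂y − g₀·∂g₁/∂y)(x,y) and Qₗ(x,y) = A₁(x)·h₀(x)·g₁² − A₀(x)·h₁(x)·g₀·g₁ − A₁(x)·h₁(x)·(g₁·∂g₀/∂x − g₀·∂g₁/∂x). Define q(x,y) = g₁(x,y)·exp(−∫₀ˣ A(s) ds). Then for all x ∈ I and y ∈ ℝ, Pₗ·∂q/∂x + Qₗ·∂q/∂y = kₗ·q at (x,y), where kₗ(x,y) = −A₀(x)·h₁(x)·g₁·∂g₀/∂y + A₁(x)·h₀(x)·g₁·∂g₁/∂y + A₁(x)·h₁(x)·(∂g₀/∂y·∂g₁/∂x − ∂g₁/∂y·∂g₀/∂x). -/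

import Mathlib

/-- Evaluation of a polynomial in two variables at `(x, y)`. -/
noncomputable def ev2 (p : MvPolynomial (Fin 2) ℝ) (x y : ℝ) : ℝ :=
  MvPolynomial.eval ![x, y] p

/-- Partial derivative with respect to the first variable. -/
noncomputable def pdX (p : MvPolynomial (Fin 2) ℝ) : MvPolynomial (Fin 2) ℝ :=
  MvPolynomial.pderiv (0 : Fin 2) p

/-- Partial derivative with respect to the second variable. -/
noncomputable def pdY (p : MvPolynomial (Fin 2) ℝ) : MvPolynomial (Fin 2) ℝ :=
  MvPolynomial.pderiv (1 : Fin 2) p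


/-- The rational function `A(x) = A₀(x)/A₁(x)`. -/
noncomputable def Afun (A₀ A₁ : Polynomial ℝ) (x : ℝ) : ℝ := A₀.eval x / A₁.eval x

/-- The rational function `h(x) = h₀(x)/h₁(x)`. -/
noncomputable def hfun (h₀ h₁ : Polynomial ℝ) (x : ℝ) : ℝ := h₀.eval x / h₁.eval x

/-- `Φ(x) = exp(−∫₀ˣ A) ∫₀ˣ exp(∫₀ˢ A) h(s) ds`. -/
noncomputable def Phi (A₀ A₁ h₀ h₁ : Polynomial ℝ) (x : ℝ) : ℝ :=
  Real.exp (-(∫ s in (0:ℝ)..x, Afun A₀ A₁ s)) *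
    ∫ s in (0:ℝ)..x, Real.exp (∫ r in (0:ℝ)..s, Afun A₀ A₁ r) * hfun h₀ h₁ s

/-- `Pₗ(x,y) = A₁ h₁ (g₁ ∂g₀/∂y − g₀ ∂g₁/∂y)`. -/
noncomputable def Pl (A₁ h₁ : Polynomial ℝ) (g₀ g₁ : MvPolynomial (Fin 2) ℝ) (x y : ℝ) : ℝ :=
  A₁.eval x * h₁.eval x * (ev2 g₁ x y * ev2 (pdY g₀) x y - ev2 g₀ x y * ev2 (pdY g₁) x y)

/-- `Qₗ(x,y) = A₁ h₀ g₁² − A₀ h₁ g₀ g₁ − A₁ h₁ (g₁ ∂g₀/∂x − g₀ ∂g₁/∂x)`. -/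
noncomputable def Ql (A₀ A₁ h₀ h₁ : Polynomial ℝ) (g₀ g₁ : MvPolynomial (Fin 2) ℝ)
    (x y : ℝ) : ℝ :=
  A₁.eval x * h₀.eval x * (ev2 g₁ x y) ^ 2
    - A₀.eval x * h₁.eval x * ev2 g₀ x y * ev2 g₁ x y
    - A₁.eval x * h₁.eval x * (ev2 g₁ x y * ev2 (pdX g₀) x y - ev2 g₀ x y * ev2 (pdX g₁) x y)

/-- The cofactor `kₗ(x,y)` of Theorem 8 / Lemma 9 of the paper. -/
noncomputable def klco (A₀ A₁ h₀ h₁ : Polynomial ℝ) (g₀ g₁ : MvPolynomial (Fin 2) ℝ)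
    (x y : ℝ) : ℝ :=
  -(A₀.eval x) * h₁.eval x * ev2 g₁ x y * ev2 (pdY g₀) x y
    + A₁.eval x * h₀.eval x * ev2 g₁ x y * ev2 (pdY g₁) x y
    + A₁.eval x * h₁.eval x
        * (ev2 (pdY g₀) x y * ev2 (pdX g₁) x y - ev2 (pdY g₁) x y * ev2 (pdX g₀) x y)

/-!
Write `q = g₁ · E` with `E(x) = exp(−∫₀ˣ A)`. By the fundamental theorem of calculus
`E' = −A E` on `I`, so `∂q/∂x = (∂g₁/∂x − A g₁) E` and `∂q/∂y = (∂g₁/∂y) E`. After cancelling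
`E`, the invariance equation is a rational identity whose only denominator is `A₁(x) ≠ 0`.
-/

theorem MvPolynomial.hasDerivAt_eval_update {𝕜 σ : Type*} [NontriviallyNormedField 𝕜]
    [DecidableEq σ] (p : MvPolynomial σ 𝕜) (v : σ → 𝕜) (i : σ) :
    HasDerivAt (fun t => eval (Function.update v i t) p) (eval v (pderiv i p)) (v i) := by
  induction p using MvPolynomial.induction_on with
  | C a => simpa using hasDerivAt_const (v i) a
  | add p q hp hq =>
    simp only [map_add]
    exact hp.add hq
  | mul_X p j hp =>
    simp only [pderiv_mul, map_add, map_mul, eval_X]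
    by_cases hj : j = i
    · subst hj
      simpa using hp.fun_mul (hasDerivAt_id' (v j))
    · simp only [Function.update_of_ne hj, pderiv_X_of_ne hj, map_zero, mul_zero, add_zero]
      exact hp.mul_const (v j)

theorem hasDerivAt_ev2_fst (p : MvPolynomial (Fin 2) ℝ) (x y : ℝ) :
    HasDerivAt (fun t => ev2 p t y) (ev2 (pdX p) x y) x :=
  (MvPolynomial.hasDerivAt_eval_update p ![x, y] 0).congr_of_eventuallyEq <|
    .of_forall fun t => by
      dsimp only [ev2]
      rw [show ![t, y] = Function.update ![x, y] 0 t by ext j; fin_cases j <;> rfl]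

theorem hasDerivAt_ev2_snd (p : MvPolynomial (Fin 2) ℝ) (x y : ℝ) :
    HasDerivAt (fun t => ev2 p x t) (ev2 (pdY p) x y) y :=
  (MvPolynomial.hasDerivAt_eval_update p ![x, y] 1).congr_of_eventuallyEq <|
    .of_forall fun t => by
      dsimp only [ev2]
      rw [show ![x, t] = Function.update ![x, y] 1 t by ext j; fin_cases j <;> rfl]

theorem hasDerivAt_integral_of_continuousOn {f : ℝ → ℝ} {I : Set ℝ} (hI : IsOpen I)
    (hI' : I.OrdConnected) (hf : ContinuousOn f I) {a x : ℝ} (ha : a ∈ I) (hx : x ∈ I) :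
    HasDerivAt (fun t => ∫ s in a..t, f s) (f x) x :=
  intervalIntegral.integral_hasDerivAt_right
    (hf.mono (hI'.uIcc_subset ha hx)).intervalIntegrable
    (hf.stronglyMeasurableAtFilter hI x hx) (hf.continuousAt (hI.mem_nhds hx))

theorem continuousOn_Afun {A₀ A₁ : Polynomial ℝ} {I : Set ℝ} (hA₁ : ∀ x ∈ I, A₁.eval x ≠ 0) :
    ContinuousOn (Afun A₀ A₁) I :=
  A₀.continuousOn.div A₁.continuousOn hA₁

theorem Pl_mul_add_Ql_mul_eq_klco_mul {A₀ A₁ : Polynomial ℝ} (h₀ h₁ : Polynomial ℝ)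
    (g₀ g₁ : MvPolynomial (Fin 2) ℝ) {x : ℝ} (hx : A₁.eval x ≠ 0) (y : ℝ) :
    Pl A₁ h₁ g₀ g₁ x y * (ev2 (pdX g₁) x y - Afun A₀ A₁ x * ev2 g₁ x y)
      + Ql A₀ A₁ h₀ h₁ g₀ g₁ x y * ev2 (pdY g₁) x y
      = klco A₀ A₁ h₀ h₁ g₀ g₁ x y * ev2 g₁ x y := by
  simp only [Pl, Ql, klco, Afun]
  field_simp
  ring

theorem stmt_7_general
    (A₀ A₁ h₀ h₁ : Polynomial ℝ) (g₀ g₁ : MvPolynomial (Fin 2) ℝ)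
    (I : Set ℝ) (hIopen : IsOpen I) (hIconn : I.OrdConnected) (h0I : (0:ℝ) ∈ I)
    (hA₁ : ∀ x ∈ I, A₁.eval x ≠ 0)
    (q : ℝ → ℝ → ℝ)
    (hq : ∀ x y, q x y = ev2 g₁ x y * Real.exp (-(∫ s in (0:ℝ)..x, Afun A₀ A₁ s))) :
    ∀ x ∈ I, ∀ y : ℝ,
      Pl A₁ h₁ g₀ g₁ x y * deriv (fun t => q t y) x
        + Ql A₀ A₁ h₀ h₁ g₀ g₁ x y * deriv (fun t => q x t) y
      = klco A₀ A₁ h₀ h₁ g₀ g₁ x y * q x y := by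
  intro x hx y
  obtain rfl : q = fun x y => ev2 g₁ x y * Real.exp (-(∫ s in (0:ℝ)..x, Afun A₀ A₁ s)) :=
    funext₂ hq
  set E := Real.exp (-(∫ s in (0:ℝ)..x, Afun A₀ A₁ s))
  have hE : HasDerivAt (fun t => Real.exp (-(∫ s in (0:ℝ)..t, Afun A₀ A₁ s)))
      (E * -Afun A₀ A₁ x) x :=
    (hasDerivAt_integral_of_continuousOn hIopen hIconn (continuousOn_Afun hA₁) h0I hx).neg.exp
  rw [((hasDerivAt_ev2_fst g₁ x y).fun_mul hE).deriv,
    ((hasDerivAt_ev2_snd g₁ x y).mul_const E).deriv]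
  linear_combination E * Pl_mul_add_Ql_mul_eq_klco_mul h₀ h₁ g₀ g₁ (hA₁ x hx) y

/-- Lemma 9 of the paper: `q(x,y) = g₁(x,y) exp(−∫₀ˣ A)` is an invariant of the system
`ẋ = Pₗ, ẏ = Qₗ` with the polynomial cofactor `kₗ`. -/
theorem stmt_7
    (A₀ A₁ h₀ h₁ : Polynomial ℝ) (g₀ g₁ : MvPolynomial (Fin 2) ℝ)
    (I : Set ℝ) (hIopen : IsOpen I) (hIconn : I.OrdConnected) (h0I : (0:ℝ) ∈ I)
    (hA₁ : ∀ x ∈ I, A₁.eval x ≠ 0) (hh₁ : ∀ x ∈ I, h₁.eval x ≠ 0)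
    (q : ℝ → ℝ → ℝ)
    (hq : ∀ x y, q x y = ev2 g₁ x y * Real.exp (-(∫ s in (0:ℝ)..x, Afun A₀ A₁ s))) :
    ∀ x ∈ I, ∀ y : ℝ,
      Pl A₁ h₁ g₀ g₁ x y * deriv (fun t => q t y) x
        + Ql A₀ A₁ h₀ h₁ g₀ g₁ x y * deriv (fun t => q x t) y
      = klco A₀ A₁ h₀ h₁ g₀ g₁ x y * q x y :=
  stmt_7_general A₀ A₁ h₀ h₁ g₀ g₁ I hIopen hIconn h0I hA₁ q hq
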